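/- arXiv:2101.03136 — 3 statements merged into one kernel-verified Lean document; each statement's English description precedes it below -/
import Mathlib

section
/- Let α ∈ [0,1) and M > 0 be fixed. Then, as τ → 0 within the cone {τ = u+iv : v > 0, |u| ≤ Mv}, one has ϑ(ατ; τ) = (−2i sin(πα) q^{−α²/2} q₀^{1/8} / √(−iτ)) · (1 + E(τ)), where there exist constants C, δ > 0 such that |E(τ)| ≤ C|q₀| for all τ in the cone with v < δ. -/
open Real Complex

/-!
Up to an exponential factor, `ϑ(z;τ)` is Mathlib's `jacobiTheta₂ (z + 1/2 + τ/2) τ`, so the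
modular transformation `τ ↦ -1/τ` of `jacobiTheta₂` turns `ϑ(ατ;τ)` into an explicit factor times
`∑ₙ e^{2πin(α+1/2)} q₀^{n(n-1)/2}`. The terms `n = 0, 1` give `1 - e^{2πiα}`, which becomes
`-2i sin(πα)` after the factor `e^{-πiα}`; every other term has `n(n-1) ≥ 2`, and in the cone
`Im(-1/τ) → ∞`, so they add up to `O(|q₀|)`. For `α = 0` both sides vanish because `ϑ` is odd
in `z`.
-/

/-- The Jacobi theta function
`ϑ(z;τ) = ∑_{m ∈ 1/2+ℤ} (-1)^m q^{m²/2} e^{2πimz}` with `(-1)^m := e^{πim}`. -/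
noncomputable def jtheta (z τ : ℂ) : ℂ :=
  ∑' n : ℤ, Complex.exp ((π : ℂ) * Complex.I * ((n : ℂ) + 1 / 2)) *
    Complex.exp ((π : ℂ) * Complex.I * τ * ((n : ℂ) + 1 / 2) ^ 2) *
    Complex.exp (2 * (π : ℂ) * Complex.I * ((n : ℂ) + 1 / 2) * z)

lemma jtheta_eq_jacobiTheta₂ (z τ : ℂ) :
    jtheta z τ = cexp (π * I * τ / 4 + π * I * (z + 1 / 2)) *
      jacobiTheta₂ (z + 1 / 2 + τ / 2) τ := by
  rw [jacobiTheta₂, ← tsum_mul_left]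
  refine tsum_congr fun n => ?_
  rw [jacobiTheta₂_term, ← Complex.exp_add, ← Complex.exp_add, ← Complex.exp_add]
  congr 1
  ring

lemma jtheta_neg (z τ : ℂ) : jtheta (-z) τ = -jtheta z τ := by
  rw [jtheta_eq_jacobiTheta₂, jtheta_eq_jacobiTheta₂,
    show -z + 1 / 2 + τ / 2 = -(z + 1 / 2 + τ / 2) + τ + 1 by ring, jacobiTheta₂_add_left,
    jacobiTheta₂_add_left', jacobiTheta₂_neg_left, ← mul_assoc, ← Complex.exp_add,
    show π * I * τ / 4 + π * I * (-z + 1 / 2) + -π * I * (τ + 2 * -(z + 1 / 2 + τ / 2)) =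
      π * I * τ / 4 + π * I * (z + 1 / 2) + π * I by ring,
    Complex.exp_add, exp_pi_mul_I]
  ring

lemma jtheta_zero (τ : ℂ) : jtheta 0 τ = 0 := by
  have h := jtheta_neg 0 τ
  rw [neg_zero] at h
  linear_combination h / 2

lemma jtheta_eq_jacobiTheta₂_neg_one_div {τ : ℂ} (hτ : τ ≠ 0) (z : ℂ) :
    jtheta z τ = cexp (-π * I * (z + 1 / 2) ^ 2 / τ) / (-I * τ) ^ (1 / 2 : ℂ) *
      jacobiTheta₂ ((z + 1 / 2) / τ + 1 / 2) (-1 / τ) := by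
  rw [jtheta_eq_jacobiTheta₂, jacobiTheta₂_functional_equation,
    show (z + 1 / 2 + τ / 2) / τ = (z + 1 / 2) / τ + 1 / 2 by field_simp]
  have hexp : cexp (π * I * τ / 4 + π * I * (z + 1 / 2)) *
      cexp (-π * I * (z + 1 / 2 + τ / 2) ^ 2 / τ) = cexp (-π * I * (z + 1 / 2) ^ 2 / τ) := by
    rw [← Complex.exp_add]
    congr 1
    field_simp
    ring
  rw [← hexp]
  ring

lemma norm_jacobiTheta₂_term_of_two_mul_im_eq {z τ : ℂ} (hz : 2 * z.im = -τ.im) (n : ℤ) :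
    ‖jacobiTheta₂_term n z τ‖ = rexp (-π * τ.im * (n * (n - 1))) := by
  rw [norm_jacobiTheta₂_term]
  congr 1
  linear_combination (-π * n) * hz

lemma norm_jacobiTheta₂_term_le_pow {z τ : ℂ} (hτ : 0 ≤ τ.im) (hz : 2 * z.im = -τ.im) {n : ℤ}
    {k : ℕ} (hn : n * (n - 1) = (k + 1) * (k + 2)) :
    ‖jacobiTheta₂_term n z τ‖ ≤ rexp (-2 * π * τ.im) ^ (k + 1) := by
  have hn' : (n : ℝ) * (n - 1) = (k + 1) * (k + 2) := by exact_mod_cast hn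
  rw [norm_jacobiTheta₂_term_of_two_mul_im_eq hz, ← Real.exp_nat_mul, Real.exp_le_exp, hn']
  push_cast
  have hk : (0 : ℝ) ≤ k := k.cast_nonneg
  nlinarith [mul_nonneg (mul_nonneg pi_pos.le hτ) (mul_nonneg (by linarith : (0 : ℝ) ≤ k + 1) hk)]

lemma norm_jacobiTheta₂_sub_two_terms_le {z τ : ℂ} (hτ : 0 < τ.im) (hz : 2 * z.im = -τ.im)
    (hr : rexp (-2 * π * τ.im) ≤ 1 / 2) :
    ‖jacobiTheta₂ z τ - 1 - jacobiTheta₂_term 1 z τ‖ ≤ 4 * rexp (-2 * π * τ.im) := by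
  set r := rexp (-2 * π * τ.im)
  set f : ℤ → ℂ := fun n => jacobiTheta₂_term n z τ
  have hf : Summable f := (hasSum_jacobiTheta₂_term z hτ).summable
  have htail {n : ℤ} {k : ℕ} (hn : n * (n - 1) = (k + 1) * (k + 2)) : ‖f n‖ ≤ r * (1 / 2) ^ k :=
    calc ‖f n‖ ≤ r ^ (k + 1) := norm_jacobiTheta₂_term_le_pow hτ.le hz hn
      _ ≤ r * (1 / 2) ^ k := by
        rw [pow_succ']
        exact mul_le_mul_of_nonneg_left (pow_le_pow_left₀ (exp_nonneg _) hr k) (exp_nonneg _)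
  have hsplit : jacobiTheta₂ z τ - 1 - f 1 =
      ∑' k : ℕ, f (k + 2) + ∑' k : ℕ, f (-(k + 1)) := by
    have hf0 : f 0 = 1 := by simp [f, jacobiTheta₂_term]
    have hnat : Summable fun n : ℕ => f n := hf.comp_injective Nat.cast_injective
    rw [jacobiTheta₂, tsum_of_nat_of_neg_add_one hnat
      (hf.comp_injective fun a b h => by simpa using h), ← hnat.sum_add_tsum_nat_add 2,
      Finset.sum_range_succ, Finset.sum_range_one, Nat.cast_zero, Nat.cast_one, hf0]
    push_cast
    ring
  calc ‖jacobiTheta₂ z τ - 1 - f 1‖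
      ≤ ‖∑' k : ℕ, f (k + 2)‖ + ‖∑' k : ℕ, f (-(k + 1))‖ := hsplit ▸ norm_add_le _ _
    _ ≤ r * 2 + r * 2 := by
      gcongr <;> refine tsum_of_norm_bounded (hasSum_geometric_two.mul_left r) fun k => htail ?_ <;>
        ring
    _ = 4 * r := by ring

lemma one_lt_im_neg_one_div_of_cone {M : ℝ} {τ : ℂ} (hτ : 0 < τ.im) (hcone : |τ.re| ≤ M * τ.im)
    (hsmall : τ.im < (M ^ 2 + 1)⁻¹) : 1 < (-1 / τ).im := by
  have hre : τ.re ^ 2 ≤ (M * τ.im) ^ 2 := sq_le_sq' (abs_le.mp hcone).1 (abs_le.mp hcone).2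
  have hsmall' : (M ^ 2 + 1) * τ.im < 1 := by
    simpa [mul_inv_cancel₀ (by positivity : M ^ 2 + 1 ≠ 0)] using
      mul_lt_mul_of_pos_left hsmall (by positivity : (0 : ℝ) < M ^ 2 + 1)
  rw [neg_div, neg_im, one_div, inv_im, neg_div, neg_neg, one_lt_div (normSq_pos.mpr
    (ne_of_apply_ne im (by simpa using hτ.ne'))), normSq_apply]
  nlinarith

lemma norm_cexp_neg_two_pi_I_div (τ : ℂ) :
    ‖cexp (-2 * π * I / τ)‖ = rexp (-2 * π * (-1 / τ).im) := by
  rw [Complex.norm_exp, show -2 * π * I / τ = ((2 * π : ℝ) : ℂ) * (-1 / τ) * I by push_cast; ring,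
    mul_I_re, im_ofReal_mul, neg_mul, neg_mul]

lemma exists_jacobiTheta₂_neg_one_div_eq (α : ℝ) {τ : ℂ} (hτ : 1 < (-1 / τ).im) :
    ∃ T : ℂ, jacobiTheta₂ (α + 1 / 2 + 1 / (2 * τ)) (-1 / τ) = 1 - cexp (2 * π * I * α) + T ∧
      ‖T‖ ≤ 4 * ‖cexp (-2 * π * I / τ)‖ := by
  set z : ℂ := α + 1 / 2 + 1 / (2 * τ)
  have hz : 2 * z.im = -(-1 / τ).im := by
    rw [show z = ((α + 1 / 2 : ℝ) : ℂ) + ((-1 / 2 : ℝ) : ℂ) * (-1 / τ) by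
      simp only [z]; push_cast; field_simp, add_im, ofReal_im, im_ofReal_mul]
    ring
  have hr : rexp (-2 * π * (-1 / τ).im) ≤ 1 / 2 :=
    calc rexp (-2 * π * (-1 / τ).im) ≤ rexp (-1) := by
          rw [Real.exp_le_exp]; nlinarith [pi_gt_three]
      _ ≤ 1 / 2 := exp_neg_one_lt_half.le
  have hterm : jacobiTheta₂_term 1 z (-1 / τ) = -cexp (2 * π * I * α) := by
    have hτ0 : τ ≠ 0 := by rintro rfl; norm_num at hτ
    rw [jacobiTheta₂_term, show 2 * π * I * (1 : ℤ) * z + π * I * (1 : ℤ) ^ 2 * (-1 / τ) =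
      2 * π * I * α + π * I by simp only [z]; push_cast; field_simp; ring, Complex.exp_add,
      exp_pi_mul_I, mul_neg_one]
  refine ⟨jacobiTheta₂ z (-1 / τ) - 1 - jacobiTheta₂_term 1 z (-1 / τ), by rw [hterm]; ring, ?_⟩
  rw [norm_cexp_neg_two_pi_I_div]
  exact norm_jacobiTheta₂_sub_two_terms_le (by linarith) hz hr

lemma jtheta_mul_self_eq {τ : ℂ} (hτ : τ ≠ 0) (α : ℂ) :
    jtheta (α * τ) τ =
      cexp (-π * I * τ * α ^ 2) * cexp (-π * I / (4 * τ)) / (-I * τ) ^ (1 / 2 : ℂ) *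
        (cexp (-π * I * α) * jacobiTheta₂ (α + 1 / 2 + 1 / (2 * τ)) (-1 / τ)) := by
  have hexp : cexp (-π * I * (α * τ + 1 / 2) ^ 2 / τ) =
      cexp (-π * I * τ * α ^ 2) * cexp (-π * I / (4 * τ)) * cexp (-π * I * α) := by
    rw [← Complex.exp_add, ← Complex.exp_add]
    congr 1
    field_simp
    ring
  rw [jtheta_eq_jacobiTheta₂_neg_one_div hτ, hexp, show (α * τ + 1 / 2) / τ + 1 / 2 =
    α + 1 / 2 + 1 / (2 * τ) by field_simp; ring]
  ring

lemma cexp_neg_pi_I_mul_mul_one_sub_cexp (x : ℂ) :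
    cexp (-π * I * x) * (1 - cexp (2 * π * I * x)) = -2 * I * Complex.sin (π * x) := by
  rw [Complex.sin, mul_sub, mul_one, ← Complex.exp_add,
    show -π * I * x + 2 * π * I * x = π * x * I by ring, show -π * I * x = -(π * x) * I by ring]
  linear_combination (cexp (-(π * x) * I) - cexp (π * x * I)) * I_sq

theorem jtheta_alpha_tau_asymp_general (α M : ℝ) (hα0 : 0 ≤ α) (hα1 : α < 1) :
    ∃ C > (0 : ℝ), ∃ δ > (0 : ℝ), ∀ u v : ℝ, 0 < v → |u| ≤ M * v → v < δ →
      ∃ E : ℂ,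
        jtheta ((α : ℂ) * ((u : ℂ) + (v : ℂ) * Complex.I)) ((u : ℂ) + (v : ℂ) * Complex.I) =
          ((-2) * Complex.I * ((Real.sin (π * α) : ℝ) : ℂ) *
            Complex.exp (-(π : ℂ) * Complex.I * ((u : ℂ) + (v : ℂ) * Complex.I) * (α : ℂ) ^ 2) *
            Complex.exp (-(π : ℂ) * Complex.I / (4 * ((u : ℂ) + (v : ℂ) * Complex.I))) /
            (-Complex.I * ((u : ℂ) + (v : ℂ) * Complex.I)) ^ ((1 : ℂ) / 2)) * (1 + E) ∧
        ‖E‖ ≤ C * ‖Complex.exp (-2 * (π : ℂ) * Complex.I / ((u : ℂ) + (v : ℂ) * Complex.I))‖ := by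
  rcases hα0.eq_or_lt with rfl | hα
  · exact ⟨1, one_pos, 1, one_pos, fun u v _ _ _ => ⟨0, by simp [jtheta_zero], by simp⟩⟩
  have hsin : 0 < Real.sin (π * α) :=
    Real.sin_pos_of_pos_of_lt_pi (by positivity) (by nlinarith [pi_pos])
  refine ⟨2 / Real.sin (π * α), by positivity, (M ^ 2 + 1)⁻¹, by positivity,
    fun u v hv hu hvδ => ?_⟩
  set τ : ℂ := u + v * I
  have hτ : 1 < (-1 / τ).im :=
    one_lt_im_neg_one_div_of_cone (by simpa [τ]) (by simpa [τ]) (by simpa [τ])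
  have hτ0 : τ ≠ 0 := by rintro h; norm_num [h] at hτ
  obtain ⟨T, hθ, hT⟩ := exists_jacobiTheta₂_neg_one_div_eq α hτ
  set D : ℂ := -2 * I * (Real.sin (π * α) : ℂ)
  have hD : ‖D‖ = 2 * Real.sin (π * α) := by
    simp only [D, norm_mul, norm_neg, Complex.norm_ofNat, norm_I, norm_real, Real.norm_eq_abs,
      abs_of_pos hsin]
    ring
  have hD0 : D ≠ 0 := norm_ne_zero_iff.mp (by rw [hD]; positivity)
  have hDsin : -2 * I * Complex.sin (π * α) = D := by simp only [D, ofReal_sin, ofReal_mul]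
  refine ⟨cexp (-π * I * α) * T / D, ?_, ?_⟩
  · rw [jtheta_mul_self_eq hτ0, hθ, mul_add (cexp _), cexp_neg_pi_I_mul_mul_one_sub_cexp, hDsin]
    field_simp
  · have he : ‖cexp (-π * I * α)‖ = 1 := by
      rw [show -π * I * α = ((-π * α : ℝ) : ℂ) * I by push_cast; ring, norm_exp_ofReal_mul_I]
    calc ‖cexp (-π * I * α) * T / D‖ = ‖T‖ / (2 * Real.sin (π * α)) := by
          rw [norm_div, norm_mul, he, one_mul, hD]
      _ ≤ 4 * ‖cexp (-2 * π * I / τ)‖ / (2 * Real.sin (π * α)) := by gcongr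
      _ = 2 / Real.sin (π * α) * ‖cexp (-2 * π * I / τ)‖ := by field_simp; ring

/-- As `τ → 0` in a cone,
`ϑ(ατ;τ) = (-2i sin(πα) q^{-α²/2} q₀^{1/8} / √(-iτ)) (1 + O(q₀))`. -/
theorem jtheta_alpha_tau_asymp (α M : ℝ) (hα0 : 0 ≤ α) (hα1 : α < 1) (hM : 0 < M) :
    ∃ C > (0 : ℝ), ∃ δ > (0 : ℝ), ∀ u v : ℝ, 0 < v → |u| ≤ M * v → v < δ →
      ∃ E : ℂ,
        jtheta ((α : ℂ) * ((u : ℂ) + (v : ℂ) * Complex.I)) ((u : ℂ) + (v : ℂ) * Complex.I) =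
          ((-2) * Complex.I * ((Real.sin (π * α) : ℝ) : ℂ) *
            Complex.exp (-(π : ℂ) * Complex.I * ((u : ℂ) + (v : ℂ) * Complex.I) * (α : ℂ) ^ 2) *
            Complex.exp (-(π : ℂ) * Complex.I / (4 * ((u : ℂ) + (v : ℂ) * Complex.I))) /
            (-Complex.I * ((u : ℂ) + (v : ℂ) * Complex.I)) ^ ((1 : ℂ) / 2)) * (1 + E) ∧
        ‖E‖ ≤ C * ‖Complex.exp (-2 * (π : ℂ) * Complex.I / ((u : ℂ) + (v : ℂ) * Complex.I))‖ :=
  jtheta_alpha_tau_asymp_general α M hα0 hα1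
end

section
/- Let α ∈ [0,1) and M > 0 be fixed. Then, as τ → 0 within the cone {τ = u+iv : v > 0, |u| ≤ Mv}, one has ϑ(1/2 + ατ; τ) = −(q^{−α²/2} / √(−iτ)) · (1 − 2cos(2πα) q₀^{1/2} + 2cos(4πα) q₀² + E(τ)), where there exist constants C, δ > 0 such that |E(τ)| ≤ C|q₀|⁴ for all τ in the cone with v < δ. -/
open Real Complex

/-!
Shifting `z` by `τ/2 + 1/2` turns `ϑ` into Mathlib's `jacobiTheta₂` times an exponential, and the
functional equation of `jacobiTheta₂` moves the argument from `τ` to `τ₀ = -1/τ`. In the cone,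
`im τ₀ ≥ 1` once `v` is small, and there the terms `|n| ≤ 2` of the `q₀`-series of
`jacobiTheta₂ (α + 1/2) τ₀` give the main terms, while the remaining ones are bounded by a
convergent Gaussian sum times `|q₀|^(9/2) ≤ |q₀|^4`.
-/

lemma jacobiTheta₂_term_add_jacobiTheta₂_term_neg (n : ℤ) (z τ : ℂ) :
    jacobiTheta₂_term n z τ + jacobiTheta₂_term (-n) z τ =
      2 * Complex.cos (2 * π * n * z) * cexp (π * I * n ^ 2 * τ) := by
  simp only [jacobiTheta₂_term, Complex.cos, Int.cast_neg, neg_sq, Complex.exp_add]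
  ring_nf

lemma sum_Icc_jacobiTheta₂_term_add_half (a τ : ℂ) :
    ∑ n ∈ Finset.Icc (-2 : ℤ) 2, jacobiTheta₂_term n (a + 1 / 2) τ =
      1 - 2 * Complex.cos (2 * π * a) * cexp (π * I * τ) +
        2 * Complex.cos (4 * π * a) * cexp (2 * π * I * τ) ^ 2 := by
  have h0 : jacobiTheta₂_term 0 (a + 1 / 2) τ = 1 := by simp [jacobiTheta₂_term]
  have h1 := jacobiTheta₂_term_add_jacobiTheta₂_term_neg 1 (a + 1 / 2) τ
  have h2 := jacobiTheta₂_term_add_jacobiTheta₂_term_neg 2 (a + 1 / 2) τ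
  rw [show 2 * (π : ℂ) * (1 : ℤ) * (a + 1 / 2) = 2 * π * a + π by push_cast; ring,
    Complex.cos_add_pi, show (π : ℂ) * I * (1 : ℤ) ^ 2 * τ = π * I * τ by push_cast; ring] at h1
  rw [show 2 * (π : ℂ) * (2 : ℤ) * (a + 1 / 2) = 4 * π * a + 2 * π by push_cast; ring,
    Complex.cos_add_two_pi, show (π : ℂ) * I * (2 : ℤ) ^ 2 * τ = (2 : ℕ) * (2 * π * I * τ) by
      push_cast; ring, Complex.exp_nat_mul] at h2
  rw [show Finset.Icc (-2 : ℤ) 2 = {0, 1, -1, 2, -2} by decide]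
  rw [Finset.sum_insert (by decide), Finset.sum_insert (by decide), Finset.sum_insert (by decide),
    Finset.sum_insert (by decide), Finset.sum_singleton]
  linear_combination h0 + h1 + h2

lemma summable_exp_neg_pi_mul_sq_sub (K : ℝ) :
    Summable fun n : ℤ => rexp (-π * ((n : ℝ) ^ 2 - K)) := by
  have h := (summable_pow_mul_jacobiTheta₂_term_bound 0 one_pos 0).mul_left (rexp (π * K))
  refine h.congr fun n => ?_
  rw [pow_zero, one_mul, ← Real.exp_add]
  ring_nf

lemma exists_norm_jacobiTheta₂_sub_sum_Icc_le (N : ℕ) :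
    ∃ C > 0, ∀ z τ : ℂ, z.im = 0 → 1 ≤ τ.im →
      ‖jacobiTheta₂ z τ - ∑ n ∈ Finset.Icc (-N : ℤ) N, jacobiTheta₂_term n z τ‖ ≤
        C * rexp (-π * (N + 1) ^ 2 * τ.im) := by
  set K : ℝ := (N + 1) ^ 2
  set s := Finset.Icc (-N : ℤ) N
  have hg := summable_exp_neg_pi_mul_sq_sub K
  refine ⟨∑' n : ℤ, rexp (-π * ((n : ℝ) ^ 2 - K)) + 1,
    by positivity, fun z τ hz hτ => ?_⟩
  have hsum : Summable (jacobiTheta₂_term · z τ) :=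
    (summable_jacobiTheta₂_term_iff _ _).2 (by linarith)
  have htail : jacobiTheta₂ z τ - ∑ n ∈ s, jacobiTheta₂_term n z τ =
      ∑' n : {n // n ∉ s}, jacobiTheta₂_term n z τ := by
    rw [jacobiTheta₂, ← hsum.sum_add_tsum_subtype_compl s, add_sub_cancel_left]
  have hK : ∀ n : {n // n ∉ s}, K ≤ ((n : ℤ) : ℝ) ^ 2 := by
    rintro ⟨n, hn⟩
    rw [Finset.mem_Icc, ← abs_le, not_le, Int.lt_iff_add_one_le] at hn
    have hsq : ((N : ℤ) + 1) ^ 2 ≤ n ^ 2 := by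
      rw [← sq_abs n]; exact pow_le_pow_left₀ (by positivity) hn 2
    simp only [K]
    exact_mod_cast hsq
  have hterm : ∀ n : {n // n ∉ s}, ‖jacobiTheta₂_term n z τ‖ ≤
      rexp (-π * K * τ.im) * rexp (-π * (((n : ℤ) : ℝ) ^ 2 - K)) := by
    intro n
    rw [norm_jacobiTheta₂_term, hz, ← Real.exp_add, Real.exp_le_exp]
    nlinarith [mul_nonneg (mul_nonneg pi_pos.le (sub_nonneg.2 (hK n))) (sub_nonneg.2 hτ)]
  rw [htail]
  calc ‖∑' n : {n // n ∉ s}, jacobiTheta₂_term n z τ‖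
      ≤ ∑' n : {n // n ∉ s}, rexp (-π * K * τ.im) * rexp (-π * (((n : ℤ) : ℝ) ^ 2 - K)) :=
        tsum_of_norm_bounded ((hg.subtype _).mul_left _).hasSum hterm
    _ = rexp (-π * K * τ.im) * ∑' n : {n // n ∉ s}, rexp (-π * (((n : ℤ) : ℝ) ^ 2 - K)) :=
        tsum_mul_left
    _ ≤ rexp (-π * K * τ.im) * ∑' n : ℤ, rexp (-π * ((n : ℝ) ^ 2 - K)) := by
        gcongr
        exact hg.tsum_subtype_le _ _ (fun _ => (Real.exp_pos _).le)
    _ ≤ _ := by nlinarith [Real.exp_pos (-π * K * τ.im)]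

lemma jtheta_eq_exp_mul_jacobiTheta₂ (z τ : ℂ) :
    jtheta z τ = cexp (π * I / 2 + π * I * τ / 4 + π * I * z) *
      jacobiTheta₂ (z + τ / 2 + 1 / 2) τ := by
  simp only [jtheta, jacobiTheta₂, jacobiTheta₂_term, ← tsum_mul_left, ← Complex.exp_add]
  congr 1 with n
  ring_nf

lemma jtheta_half_add_mul_eq {τ : ℂ} (hτ : τ ≠ 0) (a : ℂ) :
    jtheta (1 / 2 + a * τ) τ =
      -(cexp (-π * I * τ * a ^ 2) / (-I * τ) ^ (1 / 2 : ℂ)) * jacobiTheta₂ (a + 1 / 2) (-1 / τ) := by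
  rw [jtheta_eq_exp_mul_jacobiTheta₂,
    show 1 / 2 + a * τ + τ / 2 + 1 / 2 = τ * (a + 1 / 2) + 1 by ring, jacobiTheta₂_add_left,
    jacobiTheta₂_functional_equation, mul_div_cancel_left₀ _ hτ]
  have hexp : cexp (π * I / 2 + π * I * τ / 4 + π * I * (1 / 2 + a * τ)) *
      cexp (-π * I * (τ * (a + 1 / 2)) ^ 2 / τ) = -cexp (-π * I * τ * a ^ 2) := by
    rw [← Complex.exp_add, show π * I / 2 + π * I * τ / 4 + π * I * (1 / 2 + a * τ) +
        -π * I * (τ * (a + 1 / 2)) ^ 2 / τ = π * I + -π * I * τ * a ^ 2 by field_simp; ring,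
      Complex.exp_add, Complex.exp_pi_mul_I, neg_one_mul]
  linear_combination (jacobiTheta₂ (a + 1 / 2) (-1 / τ) / (-I * τ) ^ (1 / 2 : ℂ)) * hexp

lemma one_le_im_neg_one_div {M : ℝ} {τ : ℂ} (hτ : 0 < τ.im) (hcone : |τ.re| ≤ M * τ.im)
    (hsmall : τ.im < 1 / (M ^ 2 + 1)) : 1 ≤ (-1 / τ).im := by
  have hre : τ.re ^ 2 ≤ M ^ 2 * τ.im ^ 2 := by
    rw [← sq_abs, ← mul_pow]; exact pow_le_pow_left₀ (abs_nonneg _) hcone 2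
  rw [neg_div, one_div, neg_im, inv_im, neg_div, neg_neg, le_div_iff₀ (normSq_pos.2 ?_),
    normSq_apply]
  · rw [lt_div_iff₀ (by positivity)] at hsmall
    nlinarith
  · exact fun h => by simp [h] at hτ

theorem jtheta_half_shift_higher_asymp_general (α M : ℝ) :
    ∃ C > (0 : ℝ), ∃ δ > (0 : ℝ), ∀ u v : ℝ, 0 < v → |u| ≤ M * v → v < δ →
      ∃ E : ℂ,
        jtheta (1 / 2 + (α : ℂ) * ((u : ℂ) + (v : ℂ) * Complex.I))
            ((u : ℂ) + (v : ℂ) * Complex.I) =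
          -(Complex.exp (-(π : ℂ) * Complex.I * ((u : ℂ) + (v : ℂ) * Complex.I) * (α : ℂ) ^ 2) /
            (-Complex.I * ((u : ℂ) + (v : ℂ) * Complex.I)) ^ ((1 : ℂ) / 2)) *
          (1 - ((2 * Real.cos (2 * π * α) : ℝ) : ℂ) *
              Complex.exp (-(π : ℂ) * Complex.I / ((u : ℂ) + (v : ℂ) * Complex.I)) +
            ((2 * Real.cos (4 * π * α) : ℝ) : ℂ) *
              Complex.exp (-2 * (π : ℂ) * Complex.I / ((u : ℂ) + (v : ℂ) * Complex.I)) ^ 2 + E) ∧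
        ‖E‖ ≤ C * ‖Complex.exp (-2 * (π : ℂ) * Complex.I /
          ((u : ℂ) + (v : ℂ) * Complex.I))‖ ^ 4 := by
  obtain ⟨C, hC, htail⟩ := exists_norm_jacobiTheta₂_sub_sum_Icc_le 2
  refine ⟨C, hC, 1 / (M ^ 2 + 1), by positivity, fun u v hv hu hvδ => ?_⟩
  set τ : ℂ := u + v * I
  have hτ_im : τ.im = v := by simp [τ]
  have hτ : τ ≠ 0 := fun h => by simp [h] at hτ_im; linarith
  have hτ₀ : 1 ≤ (-1 / τ).im := one_le_im_neg_one_div (M := M) (by rwa [hτ_im])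
    (by simpa [τ] using hu) (by rwa [hτ_im])
  refine ⟨jacobiTheta₂ (α + 1 / 2) (-1 / τ) - (1 - ((2 * Real.cos (2 * π * α) : ℝ) : ℂ) *
      cexp (-π * I / τ) + ((2 * Real.cos (4 * π * α) : ℝ) : ℂ) * cexp (-2 * π * I / τ) ^ 2),
    by rw [jtheta_half_add_mul_eq hτ]; ring, ?_⟩
  rw [show cexp (-π * I / τ) = cexp (π * I * (-1 / τ)) by ring_nf,
    show cexp (-2 * π * I / τ) = cexp (2 * π * I * (-1 / τ)) by ring_nf, Complex.norm_exp]
  push_cast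
  rw [← sum_Icc_jacobiTheta₂_term_add_half]
  calc _ ≤ C * rexp (-π * (2 + 1) ^ 2 * (-1 / τ).im) := by
        exact_mod_cast htail _ _ (by simp) hτ₀
    _ ≤ C * rexp (2 * π * I * (-1 / τ)).re ^ 4 := by
        have hre : (2 * π * I * (-1 / τ)).re = -2 * π * (-1 / τ).im := by simp
        rw [hre, ← Real.exp_nat_mul]
        refine mul_le_mul_of_nonneg_left (Real.exp_le_exp.2 ?_) hC.le
        push_cast
        nlinarith [pi_pos]

/-- Higher order expansion: as `τ → 0` in a cone,
`ϑ(1/2 + ατ;τ) = -(q^{-α²/2}/√(-iτ)) (1 - 2cos(2πα) q₀^{1/2} + 2cos(4πα) q₀² + O(q₀⁴))`. -/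
theorem jtheta_half_shift_higher_asymp (α M : ℝ) (hα0 : 0 ≤ α) (hα1 : α < 1) (hM : 0 < M) :
    ∃ C > (0 : ℝ), ∃ δ > (0 : ℝ), ∀ u v : ℝ, 0 < v → |u| ≤ M * v → v < δ →
      ∃ E : ℂ,
        jtheta (1 / 2 + (α : ℂ) * ((u : ℂ) + (v : ℂ) * Complex.I))
            ((u : ℂ) + (v : ℂ) * Complex.I) =
          -(Complex.exp (-(π : ℂ) * Complex.I * ((u : ℂ) + (v : ℂ) * Complex.I) * (α : ℂ) ^ 2) /
            (-Complex.I * ((u : ℂ) + (v : ℂ) * Complex.I)) ^ ((1 : ℂ) / 2)) *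
          (1 - ((2 * Real.cos (2 * π * α) : ℝ) : ℂ) *
              Complex.exp (-(π : ℂ) * Complex.I / ((u : ℂ) + (v : ℂ) * Complex.I)) +
            ((2 * Real.cos (4 * π * α) : ℝ) : ℂ) *
              Complex.exp (-2 * (π : ℂ) * Complex.I / ((u : ℂ) + (v : ℂ) * Complex.I)) ^ 2 + E) ∧
        ‖E‖ ≤ C * ‖Complex.exp (-2 * (π : ℂ) * Complex.I /
          ((u : ℂ) + (v : ℂ) * Complex.I))‖ ^ 4 :=
  jtheta_half_shift_higher_asymp_general α M
end

section
/- Let b(n) denote the n-th Fourier coefficient of ν(−q) = ∑_{m≥0} q^{m²+m} / (q;q²)_{m+1}. Then the sequence (b(n))_{n≥0} is weakly increasing (b(n+1) ≥ b(n) for all n ≥ 0) and every b(n) is nonnegative. -/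
open Real

/-- `ν(-q) = ∑_{m≥0} q^{m²+m} / ∏_{j=0}^{m} (1 - q^{2j+1})`. -/
noncomputable def nuNeg (q : ℂ) : ℂ :=
  ∑' m : ℕ, q ^ (m ^ 2 + m) / ∏ j ∈ Finset.range (m + 1), (1 - q ^ (2 * j + 1))

/-!
Expanding every factor `1 / (1 - q^(2j+1))` of the `m`-th summand of `ν(-q)` as a geometric
series writes `ν(-q)` as `∑ q ^ weight ⟨m, k⟩` over all pairs of an `m` and a tuple
`k : Fin (m + 1) → ℕ`, where `weight ⟨m, k⟩ = m² + m + ∑ (2j+1) k j`. Hence `b n` counts the pairs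
of weight `n`, which is nonnegative, and adding one to `k 0` (the multiplicity of the part `1`)
injects the pairs of weight `n` into those of weight `n + 1`.

To identify `b n` with this count by uniqueness of power series coefficients, the series
`∑ b n q^n` must converge somewhere away from `0`: it does at `q = 1/4`, since otherwise its `tsum`
would be `0`, while `ν(-1/4) ≥ 1`.
-/

open Filter Topology

section PowerSeries

open FormalMultilinearSeries

variable {𝕜 : Type*} [NontriviallyNormedField 𝕜]

theorem radius_ofScalars_pos_of_summable {c : ℕ → 𝕜} {x : 𝕜} (hx : x ≠ 0)
    (h : Summable fun n => c n * x ^ n) : 0 < (ofScalars 𝕜 c).radius := by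
  have hdecay : Tendsto (fun n => ‖ofScalars 𝕜 c n‖ * (‖x‖₊ : ℝ) ^ n) atTop (𝓝 0) := by
    simpa [ofScalars_norm, norm_mul, norm_pow] using h.tendsto_atTop_zero.norm
  exact lt_of_lt_of_le (by simpa using hx) ((ofScalars 𝕜 c).le_radius_of_tendsto hdecay)

theorem eq_of_eventuallyEq_tsum_mul_pow [CompleteSpace 𝕜] {a c : ℕ → 𝕜}
    (ha : 0 < (ofScalars 𝕜 a).radius) (hc : 0 < (ofScalars 𝕜 c).radius)
    (h : (fun z => ∑' n, a n * z ^ n) =ᶠ[𝓝 0] fun z => ∑' n, c n * z ^ n) : a = c := by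
  have hsum (d : ℕ → 𝕜) : (ofScalars 𝕜 d).sum = fun z => ∑' n, d n * z ^ n := by
    funext z
    exact (ofScalars_sum_eq d z).trans (by simp only [smul_eq_mul])
  have hA := ((ofScalars 𝕜 a).hasFPowerSeriesOnBall ha).hasFPowerSeriesAt
  have hC := ((ofScalars 𝕜 c).hasFPowerSeriesOnBall hc).hasFPowerSeriesAt
  rw [hsum] at hA hC
  exact ofScalars_series_injective 𝕜 𝕜 ((hA.congr h).eq_formalMultilinearSeries hC)

end PowerSeries

section ProductOfSeries

variable {R β : Type*} [NormedCommRing R]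

theorem summable_norm_pi_prod :
    ∀ {n : ℕ} {f : Fin n → β → R}, (∀ j, Summable fun b => ‖f j b‖) →
      Summable fun k : Fin n → β => ‖∏ j, f j (k j)‖
  | 0, _, _ => .of_finite
  | n + 1, f, hf => by
    rw [← (Fin.consEquiv fun _ => β).summable_iff]
    simpa [Function.comp_def, Fin.prod_univ_succ] using
      (hf 0).mul_norm (summable_norm_pi_prod fun j => hf j.succ)

theorem tsum_pi_prod [CompleteSpace R] :
    ∀ {n : ℕ} {f : Fin n → β → R}, (∀ j, Summable fun b => ‖f j b‖) →
      ∑' k : Fin n → β, ∏ j, f j (k j) = ∏ j, ∑' b, f j b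
  | 0, _, _ => by simp
  | n + 1, f, hf => by
    rw [← (Fin.consEquiv fun _ => β).tsum_eq, Fin.prod_univ_succ,
      ← tsum_pi_prod fun j => hf j.succ,
      tsum_mul_tsum_of_summable_norm (hf 0) (summable_norm_pi_prod fun j => hf j.succ)]
    simp [Fin.prod_univ_succ]

end ProductOfSeries

theorem hasSum_ncard_fiber_mul_pow {α R : Type*} [NormedRing R] [CompleteSpace R]
    {w : α → ℕ} {q s : R} (h : HasSum (fun a => q ^ w a) s) :
    HasSum (fun n => ((w ⁻¹' {n}).ncard : R) * q ^ n) s := by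
  have hfiber (n : ℕ) : ∑' a : w ⁻¹' {n}, q ^ w a = (w ⁻¹' {n}).ncard * q ^ n := by
    rw [← Nat.card_coe_set_eq, tsum_congr fun a : w ⁻¹' {n} => congrArg (q ^ ·) a.2,
      tsum_const, nsmul_eq_mul]
  simpa only [hfiber] using h.tsum_fiberwise w

namespace NuNeg

abbrev Index := Σ m : ℕ, Fin (m + 1) → ℕ

def weight (p : Index) : ℕ := p.1 ^ 2 + p.1 + ∑ j : Fin (p.1 + 1), (2 * (j : ℕ) + 1) * p.2 j

noncomputable def count (n : ℕ) : ℕ := (weight ⁻¹' {n}).ncard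

theorem finite_weight_fiber (n : ℕ) : (weight ⁻¹' {n}).Finite := by
  let castIndex : (Σ m : Fin (n + 1), Fin (m + 1) → Fin (n + 1)) → Index :=
    fun p => ⟨p.1, fun j => p.2 j⟩
  refine (Set.finite_range castIndex).subset fun p hp => ?_
  have hn : weight p = n := hp
  have hm : p.1 ≤ n := by rw [← hn, weight]; omega
  have hk (j) : p.2 j ≤ n := by
    have hj := Finset.single_le_sum (f := fun j : Fin (p.1 + 1) => (2 * (j : ℕ) + 1) * p.2 j)
      (fun _ _ => Nat.zero_le _) (Finset.mem_univ j)
    have := Nat.le_mul_of_pos_left (p.2 j) (by omega : 0 < 2 * (j : ℕ) + 1)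
    rw [← hn, weight]
    omega
  exact ⟨⟨⟨p.1, by omega⟩, fun j => ⟨p.2 j, by have := hk j; omega⟩⟩, rfl⟩

def bump : Index → Index := Sigma.map id fun _ k => k + Pi.single 0 1

theorem bump_injective : Function.Injective bump :=
  Function.injective_id.sigma_map fun _ => add_left_injective _

theorem weight_bump : ∀ p : Index, weight (bump p) = weight p + 1
  | ⟨m, k⟩ => by
    show weight ⟨m, k + Pi.single 0 1⟩ = _
    simp only [weight, Pi.add_apply, mul_add, Finset.sum_add_distrib, add_assoc]
    congr 3
    rw [Fintype.sum_eq_single 0 fun j hj => by simp [hj]]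
    simp

theorem count_le_count_succ (n : ℕ) : count n ≤ count (n + 1) :=
  Set.ncard_le_ncard_of_injOn bump (fun p hp => by simpa [weight_bump] using hp) bump_injective.injOn
    (finite_weight_fiber _)

theorem pow_weight {M : Type*} [CommMonoid M] (a : M) (m : ℕ) (k : Fin (m + 1) → ℕ) :
    a ^ weight ⟨m, k⟩ = a ^ (m ^ 2 + m) * ∏ j : Fin (m + 1), (a ^ (2 * (j : ℕ) + 1)) ^ k j := by
  rw [weight, pow_add]
  simp_rw [← pow_mul, Finset.prod_pow_eq_pow_sum]

theorem hasSum_pow_weight_mk {𝕜 : Type*} [NormedField 𝕜] [CompleteSpace 𝕜] {q : 𝕜}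
    (hq : ‖q‖ < 1) (m : ℕ) :
    HasSum (fun k => q ^ weight ⟨m, k⟩)
      (q ^ (m ^ 2 + m) * ∏ j : Fin (m + 1), (1 - q ^ (2 * (j : ℕ) + 1))⁻¹) := by
  have hx (j : Fin (m + 1)) : ‖q ^ (2 * (j : ℕ) + 1)‖ < 1 := by
    rw [norm_pow]
    exact pow_lt_one₀ (norm_nonneg q) hq (by omega)
  have hgeom (j : Fin (m + 1)) := summable_norm_geometric_of_norm_lt_one (hx j)
  have hprod := (summable_norm_pi_prod hgeom).of_norm.hasSum
  rw [tsum_pi_prod hgeom, Finset.prod_congr rfl fun j _ => tsum_geometric_of_norm_lt_one (hx j)]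
    at hprod
  simpa only [pow_weight] using hprod.mul_left (q ^ (m ^ 2 + m))

theorem summable_pow_weight {r : ℝ} (hr0 : 0 ≤ r) (hr : r < 2⁻¹) :
    Summable fun p : Index => r ^ weight p := by
  have hr1 : r ≤ 1 := by linarith
  have hfactor (j : ℕ) : (2 : ℝ)⁻¹ ≤ 1 - r ^ (2 * j + 1) := by
    have := pow_le_pow_of_le_one hr0 hr1 (by omega : 1 ≤ 2 * j + 1)
    rw [pow_one] at this
    linarith
  have hfactor_inv (j : ℕ) : 0 ≤ (1 - r ^ (2 * j + 1))⁻¹ ∧ (1 - r ^ (2 * j + 1))⁻¹ ≤ 2 :=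
    ⟨inv_nonneg.2 (by linarith [hfactor j]), by simpa using inv_anti₀ (by norm_num) (hfactor j)⟩
  have hfiber (m : ℕ) := hasSum_pow_weight_mk (by rw [Real.norm_of_nonneg hr0]; linarith) m
  refine (summable_sigma_of_nonneg fun p => pow_nonneg hr0 _).2
    ⟨fun m => (hfiber m).summable, ?_⟩
  simp_rw [fun m => (hfiber m).tsum_eq]
  refine .of_nonneg_of_le (fun m => mul_nonneg (pow_nonneg hr0 _)
    (Finset.prod_nonneg fun j _ => (hfactor_inv j).1)) (fun m => ?_)
    ((summable_geometric_of_lt_one (by positivity) (by linarith : 2 * r < 1)).mul_left 2)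
  calc r ^ (m ^ 2 + m) * ∏ j : Fin (m + 1), (1 - r ^ (2 * (j : ℕ) + 1))⁻¹
      ≤ r ^ m * ∏ _j : Fin (m + 1), (2 : ℝ) := by
        refine mul_le_mul (pow_le_pow_of_le_one hr0 hr1 (Nat.le_add_left _ _))
          (Finset.prod_le_prod (fun j _ => (hfactor_inv j).1) fun j _ => (hfactor_inv j).2)
          (Finset.prod_nonneg fun j _ => (hfactor_inv j).1) (pow_nonneg hr0 _)
    _ = 2 * (2 * r) ^ m := by simp [mul_pow, pow_succ]; ring

theorem hasSum_pow_weight {q : ℂ} (hq : ‖q‖ < 2⁻¹) :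
    HasSum (fun p => q ^ weight p) (nuNeg q) := by
  have hS : Summable fun p => q ^ weight p :=
    .of_norm (by simpa only [norm_pow] using summable_pow_weight (norm_nonneg q) hq)
  have hterm (m : ℕ) : HasSum (fun k => q ^ weight ⟨m, k⟩)
      (q ^ (m ^ 2 + m) / ∏ j ∈ Finset.range (m + 1), (1 - q ^ (2 * j + 1))) := by
    rw [div_eq_mul_inv, ← Finset.prod_inv_distrib,
      ← Fin.prod_univ_eq_prod_range (fun j => (1 - q ^ (2 * j + 1))⁻¹)]
    exact hasSum_pow_weight_mk (hq.trans (by norm_num)) m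
  simpa only [nuNeg, (hS.hasSum.sigma hterm).tsum_eq] using hS.hasSum

theorem hasSum_count_mul_pow {q : ℂ} (hq : ‖q‖ < 2⁻¹) :
    HasSum (fun n => (count n : ℂ) * q ^ n) (nuNeg q) :=
  hasSum_ncard_fiber_mul_pow (hasSum_pow_weight hq)

theorem nuNeg_ofReal_ne_zero {r : ℝ} (hr0 : 0 ≤ r) (hr : r < 2⁻¹) : nuNeg r ≠ 0 := by
  have hR := summable_pow_weight hr0 hr
  have hC : HasSum (fun p => ((r ^ weight p : ℝ) : ℂ)) (nuNeg r) := by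
    simpa only [Complex.ofReal_pow] using
      hasSum_pow_weight (q := r) (by rwa [Complex.norm_real, Real.norm_of_nonneg hr0])
  have hone : 1 ≤ ∑' p, r ^ weight p := by
    simpa [weight] using hR.le_tsum ⟨0, 0⟩ fun _ _ => pow_nonneg hr0 _
  rw [hC.unique (Complex.hasSum_ofReal.2 hR.hasSum), Complex.ofReal_ne_zero]
  linarith

end NuNeg

open NuNeg

/-- The coefficients `b(n)` of `ν(-q)` are nonnegative and weakly increasing. -/
theorem b_weakly_increasing
    (b : ℕ → ℤ)
    (hb : ∀ q : ℂ, ‖q‖ < 1 → nuNeg q = ∑' n : ℕ, (b n : ℂ) * q ^ n) :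
    (∀ n : ℕ, b n ≤ b (n + 1)) ∧ (∀ n : ℕ, 0 ≤ b n) := by
  set x : ℂ := ((4⁻¹ : ℝ) : ℂ)
  have hx : ‖x‖ < 2⁻¹ := by norm_num [x]
  have hb_summable : Summable fun n => (b n : ℂ) * x ^ n := by
    by_contra h
    refine nuNeg_ofReal_ne_zero (r := 4⁻¹) (by norm_num) (by norm_num) ?_
    rw [hb x (hx.trans (by norm_num)), tsum_eq_zero_of_not_summable h]
  have hx0 : x ≠ 0 := by norm_num [x]
  have hbc : (fun n => (b n : ℂ)) = fun n => (count n : ℂ) := by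
    refine eq_of_eventuallyEq_tsum_mul_pow (radius_ofScalars_pos_of_summable hx0 hb_summable)
      (radius_ofScalars_pos_of_summable hx0 (hasSum_count_mul_pow hx).summable) ?_
    filter_upwards [Metric.ball_mem_nhds (0 : ℂ) (by norm_num : (0 : ℝ) < 2⁻¹)] with z hz
    rw [mem_ball_zero_iff] at hz
    rw [← hb z (hz.trans (by norm_num)), (hasSum_count_mul_pow hz).tsum_eq]
  have hcount (n : ℕ) : b n = count n := by exact_mod_cast congrFun hbc n
  exact ⟨fun n => by simpa [hcount] using count_le_count_succ n, fun n => by simp [hcount]⟩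
end
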